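/- Let α be a real number with 0 < α < 1/2, and let τ > 0. Then there exists κ₀ > 0 such that for every real κ ≥ κ₀, all integers m₁ and m₂, and every complex number ζ the following holds: setting x = 2 + m₁/α and y = 2 + m₂/α, if ζ⁴ − (2 + κ²·(x² + y²))·ζ² + (1 + κ²·(x² + y²) + κ⁴·x²·y² − 4κ²·x·y) = 0, then |Re ζ| ≥ τ. -/

import Mathlib

/-!
With `a = κx` and `b = κy` the indicial quartic factors as
`(ζ² - (1 + a²)) (ζ² - (1 + b²)) = 4ab`. Since `Re (ζ²) ≤ (Re ζ)²`, a root with `|Re ζ| < τ` makes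
each factor at least `1 + a² - τ²` (resp. `1 + b² - τ²`) in modulus, which is quadratic in `|a|`
(resp. `|b|`) as soon as `|a|, |b| ≥ 2τ`; this beats the bilinear right-hand side once
`|a|, |b| ≥ 3`. Finally `|x|, |y| ≥ min 2 ((1 - 2α)/α) > 0`, so `|a|, |b|` grow linearly in `κ`.
-/

lemma min_two_le_abs_two_add_int_div {α : ℝ} (hα : 0 < α) (m : ℤ) :
    min 2 ((1 - 2 * α) / α) ≤ |2 + m / α| := by
  rcases le_or_gt 0 m with hm | hm
  · have hdiv : (0 : ℝ) ≤ m / α := div_nonneg (by exact_mod_cast hm) hα.le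
    exact (min_le_left _ _).trans ((by linarith : (2 : ℝ) ≤ 2 + m / α).trans (le_abs_self _))
  · have hm1 : (m : ℝ) + 1 ≤ 0 := by exact_mod_cast (by omega : m + 1 ≤ 0)
    have hsplit : 2 + m / α = -((1 - 2 * α) / α) + (m + 1) / α := by field_simp; ring
    have htail : (m + 1 : ℝ) / α ≤ 0 := div_nonpos_of_nonpos_of_nonneg hm1 hα.le
    calc min 2 ((1 - 2 * α) / α) ≤ (1 - 2 * α) / α := min_le_right _ _
      _ ≤ -(2 + m / α) := by rw [hsplit]; linarith
      _ ≤ |2 + m / α| := neg_le_abs _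

lemma Complex.sub_re_sq_le_norm_sq_sub (ζ : ℂ) (c : ℝ) : c - ζ.re ^ 2 ≤ ‖ζ ^ 2 - c‖ := by
  have hre : (ζ ^ 2 - c).re = ζ.re ^ 2 - ζ.im ^ 2 - c := by
    simp [pow_two, Complex.mul_re]
  calc c - ζ.re ^ 2 ≤ -(ζ ^ 2 - c).re := by rw [hre]; linarith [sq_nonneg ζ.im]
    _ ≤ ‖ζ ^ 2 - c‖ := (neg_le_abs _).trans (Complex.abs_re_le_norm _)

lemma le_abs_re_of_mul_sub_sq_eq {a b τ : ℝ} {ζ : ℂ} (ha : max 3 (2 * τ) ≤ |a|)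
    (hb : max 3 (2 * τ) ≤ |b|)
    (h : (ζ ^ 2 - ((1 + a ^ 2 : ℝ) : ℂ)) * (ζ ^ 2 - ((1 + b ^ 2 : ℝ) : ℂ)) = ((4 * a * b : ℝ) : ℂ)) :
    τ ≤ |ζ.re| := by
  by_contra! hre
  have hre_sq : ζ.re ^ 2 < τ ^ 2 := sq_lt_sq' (abs_lt.mp hre).1 (abs_lt.mp hre).2
  have factor_ge : ∀ c : ℝ, max 3 (2 * τ) ≤ |c| →
      3 / 4 * |c| ^ 2 ≤ ‖ζ ^ 2 - ((1 + c ^ 2 : ℝ) : ℂ)‖ := fun c hc => by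
    have hτc : 2 * τ ≤ |c| := (le_max_right _ _).trans hc
    have := ζ.sub_re_sq_le_norm_sq_sub (1 + c ^ 2)
    nlinarith [sq_abs c, abs_nonneg ζ.re, abs_nonneg c]
  have h3a : 3 ≤ |a| := (le_max_left _ _).trans ha
  have h3b : 3 ≤ |b| := (le_max_left _ _).trans hb
  have hnorm : 3 / 4 * |a| ^ 2 * (3 / 4 * |b| ^ 2) ≤ 4 * (|a| * |b|) := by
    calc 3 / 4 * |a| ^ 2 * (3 / 4 * |b| ^ 2)
        ≤ ‖ζ ^ 2 - ((1 + a ^ 2 : ℝ) : ℂ)‖ * ‖ζ ^ 2 - ((1 + b ^ 2 : ℝ) : ℂ)‖ :=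
          mul_le_mul (factor_ge a ha) (factor_ge b hb) (by positivity) (norm_nonneg _)
      _ = 4 * (|a| * |b|) := by
          rw [← norm_mul, h, Complex.norm_real, Real.norm_eq_abs, abs_mul, abs_mul]
          norm_num [mul_assoc]
  have hab : 9 ≤ |a| * |b| := by nlinarith
  nlinarith

theorem indicial_roots_gap_general (α : ℝ) (hα0 : 0 < α) (hα : α < 1/2)
    (τ : ℝ) :
    ∃ κ₀ : ℝ, 0 < κ₀ ∧ ∀ κ : ℝ, κ₀ ≤ κ → ∀ m₁ m₂ : ℤ, ∀ ζ : ℂ,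
      ζ ^ 4
        - ((2 + κ^2 * ((2 + (m₁ : ℝ)/α)^2 + (2 + (m₂ : ℝ)/α)^2) : ℝ) : ℂ) * ζ ^ 2
        + ((1 + κ^2 * ((2 + (m₁ : ℝ)/α)^2 + (2 + (m₂ : ℝ)/α)^2)
            + κ^4 * (2 + (m₁ : ℝ)/α)^2 * (2 + (m₂ : ℝ)/α)^2
            - 4 * κ^2 * (2 + (m₁ : ℝ)/α) * (2 + (m₂ : ℝ)/α) : ℝ) : ℂ) = 0 →
      τ ≤ |ζ.re| := by
  set γ := min 2 ((1 - 2 * α) / α)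
  have hγ : 0 < γ := lt_min two_pos (div_pos (by linarith) hα0)
  have hN : 0 < max 3 (2 * τ) := lt_max_of_lt_left three_pos
  refine ⟨max 3 (2 * τ) / γ, div_pos hN hγ, fun κ hκ m₁ m₂ ζ hζ => ?_⟩
  have hκ0 : 0 ≤ κ := (div_pos hN hγ).le.trans hκ
  have hκm : ∀ m : ℤ, max 3 (2 * τ) ≤ |κ * (2 + m / α)| := fun m => by
    rw [abs_mul, abs_of_nonneg hκ0]
    calc max 3 (2 * τ) ≤ κ * γ := (div_le_iff₀ hγ).mp hκ
      _ ≤ κ * |2 + m / α| := mul_le_mul_of_nonneg_left (min_two_le_abs_two_add_int_div hα0 m) hκ0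
  refine le_abs_re_of_mul_sub_sq_eq (hκm m₁) (hκm m₂) ?_
  push_cast at hζ ⊢
  linear_combination hζ

/-- Lemma 1.3.1: for `α ∈ (0,1/2)` and any `τ > 0`, for `κ` large enough
every root `ζ` of the quartic indicial equation (with `x = 2 + m₁/α`,
`y = 2 + m₂/α`, `m₁ m₂ : ℤ`) satisfies `|Re ζ| ≥ τ`. -/
theorem indicial_roots_gap (α : ℝ) (hα0 : 0 < α) (hα : α < 1/2)
    (τ : ℝ) (hτ : 0 < τ) :
    ∃ κ₀ : ℝ, 0 < κ₀ ∧ ∀ κ : ℝ, κ₀ ≤ κ → ∀ m₁ m₂ : ℤ, ∀ ζ : ℂ,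
      ζ ^ 4
        - ((2 + κ^2 * ((2 + (m₁ : ℝ)/α)^2 + (2 + (m₂ : ℝ)/α)^2) : ℝ) : ℂ) * ζ ^ 2
        + ((1 + κ^2 * ((2 + (m₁ : ℝ)/α)^2 + (2 + (m₂ : ℝ)/α)^2)
            + κ^4 * (2 + (m₁ : ℝ)/α)^2 * (2 + (m₂ : ℝ)/α)^2
            - 4 * κ^2 * (2 + (m₁ : ℝ)/α) * (2 + (m₂ : ℝ)/α) : ℝ) : ℂ) = 0 →
      τ ≤ |ζ.re| :=
  indicial_roots_gap_general α hα0 hα τ
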